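/- arXiv:1607.04736 — 2 statements merged into one kernel-verified Lean document; each statement's English description precedes it below -/
import Mathlib

section
/- The standard normal CDF Φ is log-concave on ℝ, i.e., the function w ↦ log Φ(w) is concave. -/
/-- The standard normal cumulative distribution function. -/
noncomputable def stdNormalCDF (w : ℝ) : ℝ :=
  ∫ x in Set.Iic w, (Real.sqrt (2 * Real.pi))⁻¹ * Real.exp (-x ^ 2 / 2)

/-!
Write `φ` for the standard normal density, so that `Φ' = φ` and `φ'(w) = -w φ(w)`. Then
`(log Φ)'' = (-w φ Φ - φ²) / Φ²`, which is nonpositive as soon as `-w Φ(w) ≤ φ(w)`. This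
inequality follows by integrating `φ' = -x φ` over `(-∞, w]`: there `-x ≥ -w`, so
`φ(w) = ∫_{-∞}^w (-x) φ(x) dx ≥ -w Φ(w)`.
-/

open Real MeasureTheory Set Filter

theorem hasDerivAt_integral_Iic {E : Type*} [NormedAddCommGroup E] [NormedSpace ℝ E]
    [CompleteSpace E] {f : ℝ → E} (hf : Continuous f) (hfi : Integrable f) (w : ℝ) :
    HasDerivAt (fun u => ∫ x in Iic u, f x) (f w) w := by
  have h_split : (fun u => ∫ x in Iic u, f x) =
      fun u => (∫ x in (0:ℝ)..u, f x) + ∫ x in Iic 0, f x := by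
    ext u
    rw [← intervalIntegral.integral_Iic_sub_Iic hfi.integrableOn hfi.integrableOn, sub_add_cancel]
  rw [h_split]
  exact (hf.integral_hasStrictDerivAt 0 w).hasDerivAt.add_const _

theorem concaveOn_univ_log_of_hasDerivAt {F f f' : ℝ → ℝ} (hF_pos : ∀ x, 0 < F x)
    (hF : ∀ x, HasDerivAt F (f x) x) (hf : ∀ x, HasDerivAt f (f' x) x)
    (h : ∀ x, f' x * F x ≤ f x ^ 2) : ConcaveOn ℝ univ (fun x => log (F x)) := by
  have h_log : ∀ x, HasDerivAt (fun x => log (F x)) (f x / F x) x := fun x =>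
    (hF x).log (hF_pos x).ne'
  have h_deriv : deriv (fun x => log (F x)) = fun x => f x / F x := funext fun x => (h_log x).deriv
  have h_log' : ∀ x, HasDerivAt (deriv fun x => log (F x))
      ((f' x * F x - f x * f x) / F x ^ 2) x := fun x => by
    rw [h_deriv]
    exact (hf x).div (hF x) (hF_pos x).ne'
  refine concaveOn_univ_of_deriv2_nonpos (fun x => (h_log x).differentiableAt)
    (fun x => (h_log' x).differentiableAt) fun x => ?_
  rw [Function.iterate_succ_apply, Function.iterate_one, (h_log' x).deriv]
  exact div_nonpos_of_nonpos_of_nonneg (by nlinarith [h x]) (sq_nonneg _)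

noncomputable def stdNormalPDF (x : ℝ) : ℝ :=
  (√(2 * π))⁻¹ * exp (-x ^ 2 / 2)

theorem stdNormalCDF_eq_integral_stdNormalPDF (w : ℝ) :
    stdNormalCDF w = ∫ x in Iic w, stdNormalPDF x := rfl

theorem stdNormalPDF_pos (x : ℝ) : 0 < stdNormalPDF x := by
  unfold stdNormalPDF
  positivity

theorem continuous_stdNormalPDF : Continuous stdNormalPDF := by
  unfold stdNormalPDF
  fun_prop

theorem hasDerivAt_stdNormalPDF (x : ℝ) : HasDerivAt stdNormalPDF (-x * stdNormalPDF x) x := by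
  have h := (((hasDerivAt_pow 2 x).neg.div_const 2).exp).const_mul (√(2 * π))⁻¹
  refine h.congr_deriv ?_
  simp only [stdNormalPDF, Pi.neg_apply]
  push_cast
  ring

theorem integrable_stdNormalPDF : Integrable stdNormalPDF := by
  refine ((integrable_exp_neg_mul_sq (b := 1 / 2) (by norm_num)).const_mul (√(2 * π))⁻¹).congr
    (Eventually.of_forall fun x => ?_)
  simp only [stdNormalPDF]
  ring_nf

theorem integrable_neg_mul_stdNormalPDF : Integrable fun x => -x * stdNormalPDF x := by
  refine ((integrable_mul_exp_neg_mul_sq (b := 1 / 2) (by norm_num)).const_mul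
    (-(√(2 * π))⁻¹)).congr (Eventually.of_forall fun x => ?_)
  simp only [stdNormalPDF]
  ring_nf

theorem stdNormalCDF_pos (w : ℝ) : 0 < stdNormalCDF w := by
  rw [stdNormalCDF_eq_integral_stdNormalPDF, setIntegral_pos_iff_support_of_nonneg_ae
    (Eventually.of_forall fun x => (stdNormalPDF_pos x).le) integrable_stdNormalPDF.integrableOn,
    Function.support_eq_univ fun x => (stdNormalPDF_pos x).ne', univ_inter]
  simp

theorem hasDerivAt_stdNormalCDF (w : ℝ) : HasDerivAt stdNormalCDF (stdNormalPDF w) w :=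
  hasDerivAt_integral_Iic continuous_stdNormalPDF integrable_stdNormalPDF w

theorem stdNormalPDF_eq_integral_Iic (w : ℝ) :
    stdNormalPDF w = ∫ x in Iic w, -x * stdNormalPDF x := by
  have h_deriv : ∀ x ∈ Iic w, HasDerivAt stdNormalPDF (-x * stdNormalPDF x) x :=
    fun x _ => hasDerivAt_stdNormalPDF x
  have h_lim : Tendsto stdNormalPDF atBot (nhds 0) :=
    tendsto_zero_of_hasDerivAt_of_integrableOn_Iic h_deriv
      integrable_neg_mul_stdNormalPDF.integrableOn integrable_stdNormalPDF.integrableOn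
  rw [integral_Iic_of_hasDerivAt_of_tendsto' h_deriv integrable_neg_mul_stdNormalPDF.integrableOn
    h_lim, sub_zero]

theorem neg_mul_stdNormalCDF_le_stdNormalPDF (w : ℝ) :
    -w * stdNormalCDF w ≤ stdNormalPDF w := by
  rw [stdNormalCDF_eq_integral_stdNormalPDF, ← integral_const_mul, stdNormalPDF_eq_integral_Iic]
  refine setIntegral_mono_on (integrable_stdNormalPDF.const_mul _).integrableOn
    integrable_neg_mul_stdNormalPDF.integrableOn measurableSet_Iic fun x (hx : x ≤ w) => ?_
  exact mul_le_mul_of_nonneg_right (neg_le_neg hx) (stdNormalPDF_pos x).le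

theorem stmt2 :
    ConcaveOn ℝ Set.univ (fun w : ℝ => Real.log (stdNormalCDF w)) :=
  concaveOn_univ_log_of_hasDerivAt stdNormalCDF_pos hasDerivAt_stdNormalCDF hasDerivAt_stdNormalPDF
    fun w => by nlinarith [neg_mul_stdNormalCDF_le_stdNormalPDF w, stdNormalPDF_pos w]
end

section
/- If ρ ∈ (−1,0), then the bivariate Gaussian copula satisfies C_ρ(u,v) < uv for all u, v ∈ (0,1). -/
/-- The bivariate standard normal distribution function with correlation ρ. -/
noncomputable def biNormalCDF (ρ s t : ℝ) : ℝ :=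
  ∫ x in Set.Iic s, ∫ y in Set.Iic t,
    (2 * Real.pi * Real.sqrt (1 - ρ ^ 2))⁻¹ *
      Real.exp (-(x ^ 2 - 2 * ρ * x * y + y ^ 2) / (2 * (1 - ρ ^ 2)))

open MeasureTheory ProbabilityTheory Set Real

lemma StrictMono.setIntegral_Iic_lt_measureReal_mul_integral {μ : Measure ℝ}
    [IsProbabilityMeasure μ] {G : ℝ → ℝ} (hG : StrictMono G) (hint : Integrable G μ) {s : ℝ}
    (hlt : μ (Iio s) ≠ 0) (hgt : μ (Ioi s) ≠ 0) :
    ∫ x in Iic s, G x ∂μ < μ.real (Iic s) * ∫ x, G x ∂μ := by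
  have below : 0 < ∫ x in Iic s, (G s - G x) ∂μ := by
    refine (setIntegral_pos_iff_support_of_nonneg_ae ?_ ?_).mpr ?_
    · filter_upwards [ae_restrict_mem measurableSet_Iic] with x hx
      exact sub_nonneg.mpr (hG.monotone hx)
    · exact ((integrable_const _).sub hint).integrableOn
    · refine (pos_iff_ne_zero.mpr hlt).trans_le (measure_mono fun x (hx : x < s) => ?_)
      exact ⟨(sub_pos.mpr (hG hx)).ne', hx.le⟩
  have above : 0 < ∫ x in Ioi s, (G x - G s) ∂μ := by
    refine (setIntegral_pos_iff_support_of_nonneg_ae ?_ ?_).mpr ?_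
    · filter_upwards [ae_restrict_mem measurableSet_Ioi] with x hx
      exact sub_nonneg.mpr (hG.monotone (le_of_lt hx))
    · exact (hint.sub (integrable_const _)).integrableOn
    · refine (pos_iff_ne_zero.mpr hgt).trans_le (measure_mono fun x (hx : s < x) => ?_)
      exact ⟨(sub_pos.mpr (hG hx)).ne', hx⟩
  have hsplit : ∫ x, G x ∂μ = ∫ x in Iic s, G x ∂μ + ∫ x in Ioi s, G x ∂μ := by
    rw [← setIntegral_union (Iic_disjoint_Ioi le_rfl) measurableSet_Ioi hint.integrableOn
      hint.integrableOn, Iic_union_Ioi, setIntegral_univ]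
  have hmass : μ.real (Iic s) + μ.real (Ioi s) = 1 := by
    rw [← measureReal_union (Iic_disjoint_Ioi le_rfl) measurableSet_Ioi, Iic_union_Ioi,
      probReal_univ]
  rw [integral_sub (integrable_const _).integrableOn hint.integrableOn, setIntegral_const,
    smul_eq_mul] at below
  rw [integral_sub hint.integrableOn (integrable_const _).integrableOn, setIntegral_const,
    smul_eq_mul] at above
  have hpos : 0 < μ.real (Ioi s) := ENNReal.toReal_pos hgt (measure_ne_top μ _)
  rw [hsplit]
  -- `a (A + B) - A = a (B - (1 - a) G s) + (1 - a) (a G s - A)` for `a = μ.real (Iic s)`,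
  -- `A = ∫_{Iic s} G`, `B = ∫_{Ioi s} G`
  linear_combination mul_pos hpos below + mul_nonneg (measureReal_nonneg (s := Iic s)) above.le -
    (∫ x in Iic s, G x ∂μ) * hmass

lemma stdNormalCDF_eq_cdf : stdNormalCDF = cdf (gaussianReal 0 1) := by
  ext w
  rw [cdf_eq_real, measureReal_def, gaussianReal_apply_eq_integral 0 one_ne_zero,
    ENNReal.toReal_ofReal (setIntegral_nonneg measurableSet_Iic
      fun x _ => gaussianPDFReal_nonneg 0 1 x)]
  simp [stdNormalCDF, gaussianPDFReal]

lemma gaussianReal_ne_zero_of_volume_ne_zero (m : ℝ) {v : NNReal} (hv : v ≠ 0) {s : Set ℝ}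
    (hs : volume s ≠ 0) : gaussianReal m v s ≠ 0 :=
  fun h => hs (gaussianReal_absolutelyContinuous' m hv h)

lemma stdNormalCDF_strictMono : StrictMono stdNormalCDF := by
  intro a b hab
  have h := gaussianReal_ne_zero_of_volume_ne_zero 0 one_ne_zero
    (s := Ioc a b) (by simp [hab])
  rwa [← measure_cdf (gaussianReal 0 1), StieltjesFunction.measure_Ioc, ← stdNormalCDF_eq_cdf,
    ne_eq, ENNReal.ofReal_eq_zero, not_le, sub_pos] at h

lemma setIntegral_gaussianReal_eq_setIntegral_mul (m : ℝ) {v : NNReal} (hv : v ≠ 0)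
    (f : ℝ → ℝ) (s : Set ℝ) :
    ∫ x in s, f x ∂gaussianReal m v = ∫ x in s, gaussianPDFReal m v x * f x := by
  rw [gaussianReal_of_var_ne_zero m hv, setIntegral_withDensity_eq_setIntegral_toReal_smul' s
    (measurable_gaussianPDF m v) (ae_of_all _ fun _ => gaussianPDF_lt_top)]
  simp [gaussianPDF, gaussianPDFReal_nonneg]

lemma gaussianReal_eq_map_stdGaussian (m : ℝ) (v : NNReal) :
    gaussianReal m v = (gaussianReal 0 1).map (fun x => √v * x + m) := by
  change _ = (gaussianReal 0 1).map ((· + m) ∘ (√v * ·))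
  rw [← Measure.map_map (by fun_prop) (by fun_prop), gaussianReal_map_const_mul,
    gaussianReal_map_add_const]
  congr
  · simp
  · ext; simp

lemma setIntegral_Iic_gaussianPDFReal (m : ℝ) {v : NNReal} (hv : v ≠ 0) (t : ℝ) :
    ∫ y in Iic t, gaussianPDFReal m v y = stdNormalCDF ((t - m) / √v) := by
  have hσ : 0 < √(v : ℝ) := Real.sqrt_pos.mpr (by positivity)
  have hpre : (fun x => √v * x + m) ⁻¹' Iic t = Iic ((t - m) / √v) := by
    ext x
    simp only [mem_preimage, mem_Iic, le_div_iff₀ hσ]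
    constructor <;> intro h <;> linarith
  rw [stdNormalCDF_eq_cdf, cdf_eq_real, ← hpre, ← map_measureReal_apply (by fun_prop)
    measurableSet_Iic, ← gaussianReal_eq_map_stdGaussian, measureReal_def,
    gaussianReal_apply_eq_integral m hv, ENNReal.toReal_ofReal (setIntegral_nonneg
      measurableSet_Iic fun x _ => gaussianPDFReal_nonneg m v x)]

noncomputable def biNormalPDF (ρ x y : ℝ) : ℝ :=
  (2 * π * √(1 - ρ ^ 2))⁻¹ * exp (-(x ^ 2 - 2 * ρ * x * y + y ^ 2) / (2 * (1 - ρ ^ 2)))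

lemma biNormalCDF_eq_setIntegral_biNormalPDF (ρ s t : ℝ) :
    biNormalCDF ρ s t = ∫ x in Iic s, ∫ y in Iic t, biNormalPDF ρ x y := rfl

lemma biNormalPDF_comm (ρ x y : ℝ) : biNormalPDF ρ x y = biNormalPDF ρ y x := by
  unfold biNormalPDF; ring_nf

lemma continuous_biNormalPDF (ρ : ℝ) : Continuous (Function.uncurry (biNormalPDF ρ)) := by
  unfold Function.uncurry biNormalPDF; fun_prop

-- `P(Y ≤ t | X = x)` for `(X, Y)` with density `biNormalPDF ρ`
noncomputable def condNormalCDF (ρ t x : ℝ) : ℝ :=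
  stdNormalCDF ((t - ρ * x) / √(1 - ρ ^ 2))

lemma integrable_condNormalCDF (ρ t : ℝ) {μ : Measure ℝ} [IsFiniteMeasure μ] :
    Integrable (condNormalCDF ρ t) μ := by
  have hmeas : Measurable (condNormalCDF ρ t) :=
    stdNormalCDF_strictMono.monotone.measurable.comp (by fun_prop)
  refine .of_bound hmeas.aestronglyMeasurable 1 (ae_of_all _ fun x => ?_)
  rw [condNormalCDF, stdNormalCDF_eq_cdf, Real.norm_of_nonneg (cdf_nonneg _ _)]
  exact cdf_le_one _ _

section Correlated

variable {ρ : ℝ} (hρ : ρ ^ 2 < 1)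
include hρ

lemma biNormalPDF_eq_mul (x y : ℝ) :
    biNormalPDF ρ x y =
      gaussianPDFReal 0 1 x * gaussianPDFReal (ρ * x) (1 - ρ ^ 2).toNNReal y := by
  have hσ2 : 0 < 1 - ρ ^ 2 := by linarith
  simp only [biNormalPDF, gaussianPDFReal, Real.coe_toNNReal _ hσ2.le, NNReal.coe_one]
  rw [mul_mul_mul_comm, ← mul_inv, ← exp_add, ← Real.sqrt_mul (by positivity), mul_one,
    sub_zero, ← mul_assoc, Real.sqrt_mul (by positivity), Real.sqrt_mul_self (by positivity)]
  congr 2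
  field_simp
  ring

lemma biNormalPDF_nonneg (x y : ℝ) : 0 ≤ biNormalPDF ρ x y := by
  rw [biNormalPDF_eq_mul hρ]
  exact mul_nonneg (gaussianPDFReal_nonneg _ _ _) (gaussianPDFReal_nonneg _ _ _)

lemma integrable_biNormalPDF_right (x : ℝ) : Integrable (biNormalPDF ρ x) := by
  rw [funext (biNormalPDF_eq_mul hρ x)]
  exact (integrable_gaussianPDFReal _ _).const_mul _

lemma integral_biNormalPDF_right (x : ℝ) : ∫ y, biNormalPDF ρ x y = gaussianPDFReal 0 1 x := by
  simp_rw [biNormalPDF_eq_mul hρ x]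
  rw [integral_const_mul,
    integral_gaussianPDFReal_eq_one _ (Real.toNNReal_pos.mpr (by linarith)).ne', mul_one]

lemma integrable_biNormalPDF :
    Integrable (Function.uncurry (biNormalPDF ρ)) (volume.prod volume) := by
  refine (integrable_prod_iff (continuous_biNormalPDF ρ).aestronglyMeasurable).mpr
    ⟨ae_of_all _ (integrable_biNormalPDF_right hρ), ?_⟩
  simp_rw [Function.uncurry_apply_pair, Real.norm_of_nonneg (biNormalPDF_nonneg hρ _ _),
    integral_biNormalPDF_right hρ]
  exact integrable_gaussianPDFReal 0 1

lemma setIntegral_Iic_biNormalPDF (x t : ℝ) :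
    ∫ y in Iic t, biNormalPDF ρ x y = gaussianPDFReal 0 1 x * condNormalCDF ρ t x := by
  simp_rw [biNormalPDF_eq_mul hρ x, condNormalCDF]
  rw [integral_const_mul,
    setIntegral_Iic_gaussianPDFReal _ (Real.toNNReal_pos.mpr (by linarith)).ne',
    Real.coe_toNNReal _ (by linarith)]

lemma integral_condNormalCDF (t : ℝ) :
    ∫ x, condNormalCDF ρ t x ∂gaussianReal 0 1 = stdNormalCDF t := by
  calc ∫ x, condNormalCDF ρ t x ∂gaussianReal 0 1
      = ∫ x, ∫ y in Iic t, biNormalPDF ρ x y := by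
        simp_rw [integral_gaussianReal_eq_integral_smul one_ne_zero, smul_eq_mul,
          setIntegral_Iic_biNormalPDF hρ]
    _ = ∫ y in Iic t, ∫ x, biNormalPDF ρ x y :=
        integral_integral_swap ((integrable_biNormalPDF hρ).mono_measure
          (Measure.prod_mono le_rfl Measure.restrict_le_self))
    _ = ∫ y in Iic t, gaussianPDFReal 0 1 y := by
        simp_rw [biNormalPDF_comm ρ _ (_ : ℝ), integral_biNormalPDF_right hρ]
    _ = stdNormalCDF t := by simp [setIntegral_Iic_gaussianPDFReal]

lemma biNormalCDF_eq_setIntegral_condNormalCDF (s t : ℝ) :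
    biNormalCDF ρ s t = ∫ x in Iic s, condNormalCDF ρ t x ∂gaussianReal 0 1 := by
  simp_rw [biNormalCDF_eq_setIntegral_biNormalPDF, setIntegral_Iic_biNormalPDF hρ,
    setIntegral_gaussianReal_eq_setIntegral_mul 0 one_ne_zero]

lemma condNormalCDF_strictMono (hρ₀ : ρ < 0) (t : ℝ) : StrictMono (condNormalCDF ρ t) :=
  stdNormalCDF_strictMono.comp fun _ _ hab =>
    div_lt_div_of_pos_right (by nlinarith) (Real.sqrt_pos.mpr (by linarith))

end Correlated

theorem stmt12_general (ρ : ℝ) (hρ : ρ ∈ Set.Ioo (-1 : ℝ) 0) (Φinv : ℝ → ℝ)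
    (hinv₁ : ∀ p ∈ Set.Ioo (0 : ℝ) 1, stdNormalCDF (Φinv p) = p)
    (u v : ℝ) (hu : u ∈ Set.Ioo (0 : ℝ) 1) (hv : v ∈ Set.Ioo (0 : ℝ) 1) :
    biNormalCDF ρ (Φinv u) (Φinv v) < u * v := by
  obtain ⟨hρ₁, hρ₀⟩ := hρ
  have hρ2 : ρ ^ 2 < 1 := by nlinarith
  have hN : ∀ {S : Set ℝ}, volume S ≠ 0 → gaussianReal 0 1 S ≠ 0 :=
    gaussianReal_ne_zero_of_volume_ne_zero 0 one_ne_zero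
  calc biNormalCDF ρ (Φinv u) (Φinv v)
      = ∫ x in Iic (Φinv u), condNormalCDF ρ (Φinv v) x ∂gaussianReal 0 1 :=
        biNormalCDF_eq_setIntegral_condNormalCDF hρ2 _ _
    _ < (gaussianReal 0 1).real (Iic (Φinv u)) *
          ∫ x, condNormalCDF ρ (Φinv v) x ∂gaussianReal 0 1 :=
        (condNormalCDF_strictMono hρ2 hρ₀ _).setIntegral_Iic_lt_measureReal_mul_integral
          (integrable_condNormalCDF _ _) (hN (by simp)) (hN (by simp))
    _ = u * v := by
        rw [integral_condNormalCDF hρ2, ← cdf_eq_real, ← stdNormalCDF_eq_cdf, hinv₁ u hu,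
          hinv₁ v hv]

theorem stmt12 (ρ : ℝ) (hρ : ρ ∈ Set.Ioo (-1 : ℝ) 0) (Φinv : ℝ → ℝ)
    (hinv₁ : ∀ p ∈ Set.Ioo (0 : ℝ) 1, stdNormalCDF (Φinv p) = p)
    (hinv₂ : ∀ w : ℝ, Φinv (stdNormalCDF w) = w)
    (u v : ℝ) (hu : u ∈ Set.Ioo (0 : ℝ) 1) (hv : v ∈ Set.Ioo (0 : ℝ) 1) :
    biNormalCDF ρ (Φinv u) (Φinv v) < u * v :=
  stmt12_general ρ hρ Φinv hinv₁ u v hu hv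
end
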